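/- Chained support Jacobian: let S⁽⁰⁾ = q(A⁽⁰⁾, X_{:,m}) and S⁽ℓ⁾ = q(A⁽ℓ⁾, S⁽ℓ⁻¹⁾) column-wise, with every pair (A⁽ℓ⁾, S⁽ℓ⁻¹⁾_{:,m}) in the locally-constant-support set U. Let T_m⁽ℓ⁾ = supp S⁽ℓ⁾_{:,m}. Then the Jacobian of S⁽ℓ₂⁾_{:,m} with respect to S⁽ℓ₁⁾_{:,m} has rows indexed by T_m⁽ℓ₂⁾ equal to the product Φ = (A⁽ℓ₂⁾_{:,T_m⁽ℓ₂⁾}†)_{:,T_m⁽ℓ₂⁻¹⁾} (A⁽ℓ₂⁻¹⁾_{:,T_m⁽ℓ₂⁻¹⁾}†)_{:,T_m⁽ℓ₂⁻²⁾} ⋯ (A⁽ℓ₁⁺¹⁾_{:,T_m⁽ℓ₁⁺¹⁾}†), and rows outside T_m⁽ℓ₂⁾ equal to zero. -/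

import Mathlib

open Matrix

/-- Moore–Penrose pseudoinverse of a full-column-rank real matrix. -/
noncomputable def pinv {m n : Type*} [Fintype m] [Fintype n] [DecidableEq n]
    (A : Matrix m n ℝ) : Matrix n m ℝ := (Aᵀ * A)⁻¹ * Aᵀ

/-- `v` is the nonnegative least squares solution for `A`, `x`. -/
def IsNNLS {r s : ℕ} (A : Matrix (Fin r) (Fin s) ℝ) (x : Fin r → ℝ) (v : Fin s → ℝ) : Prop :=
  (∀ j, 0 ≤ v j) ∧
    ∀ w : Fin s → ℝ, (∀ j, 0 ≤ w j) →
      ∑ i, (x i - A.mulVec v i) ^ 2 ≤ ∑ i, (x i - A.mulVec w i) ^ 2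

/-- The composite forward map from `S`-layer `ℓ` to `S`-layer `ℓ + t`, where
`QA ℓ' = q(A^{(ℓ')}, ·)` is the layer-`ℓ'` NNLS map. -/
noncomputable def iter {d : ℕ → ℕ}
    (QA : (ℓ : ℕ) → (Fin (d ℓ) → ℝ) → (Fin (d (ℓ + 1)) → ℝ)) (ℓ : ℕ) :
    (t : ℕ) → (Fin (d (ℓ + 1)) → ℝ) → (Fin (d (ℓ + t + 1)) → ℝ)
  | 0, y => y
  | t + 1, y => QA (ℓ + t + 1) (iter QA ℓ t y)

/-- The matrix `Φ^{(ℓ+1, ℓ+t+1)}`: product of support-restricted pseudoinverses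
`(A^{(ℓ+t+1)}_{:,T^{(ℓ+t+1)}}†)_{:,T^{(ℓ+t)}} ⋯ (A^{(ℓ+1)}_{:,T^{(ℓ+1)}}†)`. -/
noncomputable def Phi {d : ℕ → ℕ}
    (A : (ℓ : ℕ) → Matrix (Fin (d ℓ)) (Fin (d (ℓ + 1))) ℝ)
    (Ts : (ℓ : ℕ) → Finset (Fin (d (ℓ + 1)))) (ℓ : ℕ) :
    (t : ℕ) → Matrix {j // j ∈ Ts (ℓ + t + 1)} (Fin (d (ℓ + 1))) ℝ
  | 0 => pinv ((A (ℓ + 1)).submatrix id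
      (Subtype.val : {j // j ∈ Ts (ℓ + 1)} → Fin (d (ℓ + 2))))
  | t + 1 =>
      ((pinv ((A (ℓ + t + 2)).submatrix id
          (Subtype.val : {j // j ∈ Ts (ℓ + t + 2)} → Fin (d (ℓ + t + 3))))).submatrix id
        (Subtype.val : {j // j ∈ Ts (ℓ + t + 1)} → Fin (d (ℓ + t + 2)))) * Phi A Ts ℓ t


/-!
Near a nonnegative input at which the support `T` of the NNLS solution is locally constant,
the first-order optimality conditions say that the solution vanishes off `T` and that its
restriction to `T` satisfies the normal equations of `A_{:,T}`. Hence the solution map agrees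
there with the linear map `y ↦ A_{:,T}† y` padded by zero rows, and this is its Jacobian. The
chain rule multiplies these padded Jacobians layer by layer; the zero rows of each factor kill
the columns of the next one outside the support, which leaves exactly the product `Φ`.
-/

namespace Matrix

theorem linearIndependent_col_of_rank_eq {m n K : Type*} [Fintype n] [Field K] (A : Matrix m n K)
    (h : A.rank = Fintype.card n) : LinearIndependent K A.col := by
  rw [linearIndependent_iff_card_eq_finrank_span, ← h, rank_eq_finrank_span_cols]
  rfl

theorem isUnit_transpose_mul_self {m n R : Type*} [Fintype m] [Fintype n] [DecidableEq n]
    [Field R] [LinearOrder R] [IsStrictOrderedRing R] {A : Matrix m n R}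
    (hA : LinearIndependent R A.col) : IsUnit (Aᵀ * A) := by
  rw [← mulVec_injective_iff_isUnit, ← coe_mulVecLin, ← LinearMap.ker_eq_bot,
    ker_mulVecLin_transpose_mul_self, LinearMap.ker_eq_bot, coe_mulVecLin]
  exact mulVec_injective_iff.mpr hA

theorem toContinuousLinearMap_mulVecLin_mul {l m n : Type*} [Fintype m] [Fintype n]
    (M : Matrix l m ℝ) (N : Matrix m n ℝ) :
    (mulVecLin (M * N)).toContinuousLinearMap =
      (mulVecLin M).toContinuousLinearMap.comp (mulVecLin N).toContinuousLinearMap := by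
  ext1 y
  exact (mulVec_mulVec y M N).symm

variable {l m n α : Type*} [DecidableEq m]

def extendRows [Zero α] (T : Finset m) (M : Matrix T n α) : Matrix m n α :=
  of fun j i => if hj : j ∈ T then M ⟨j, hj⟩ i else 0

theorem extendRows_mulVec [Fintype n] [NonUnitalNonAssocSemiring α] (T : Finset m)
    (M : Matrix T n α) (y : n → α) (j : m) :
    (extendRows T M *ᵥ y) j = if hj : j ∈ T then (M *ᵥ y) ⟨j, hj⟩ else 0 := by
  by_cases hj : j ∈ T <;> simp [extendRows, mulVec, dotProduct, hj]

theorem extendRows_mul_extendRows [Fintype l] [DecidableEq l] [NonUnitalNonAssocSemiring α]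
    {S : Finset m} {T : Finset l} (N : Matrix S l α) (M : Matrix T n α) :
    extendRows S N * extendRows T M = extendRows S (N.submatrix id Subtype.val * M) := by
  ext j i
  by_cases hj : j ∈ S
  · simp only [extendRows, mul_apply, of_apply, dif_pos hj, mul_dite, mul_zero]
    exact (Finset.sum_attach_eq_sum_dite T fun k => N ⟨j, hj⟩ k * M k i).symm
  · simp [extendRows, mul_apply, hj]

end Matrix

section Pinv

variable {m n : Type*} [Fintype m] [Fintype n] [DecidableEq n]

theorem pinv_mul_self {A : Matrix m n ℝ} (hA : LinearIndependent ℝ A.col) :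
    pinv A * A = 1 := by
  rw [pinv, Matrix.mul_assoc]
  exact nonsing_inv_mul _ ((isUnit_iff_isUnit_det _).mp (isUnit_transpose_mul_self hA))

theorem eq_pinv_mulVec_of_transpose_mulVec_sub_eq_zero {A : Matrix m n ℝ}
    (hA : LinearIndependent ℝ A.col) {y : m → ℝ} {u : n → ℝ}
    (h : Aᵀ *ᵥ (y - A *ᵥ u) = 0) : u = pinv A *ᵥ y := by
  rw [mulVec_sub, sub_eq_zero] at h
  calc u = (pinv A * A) *ᵥ u := by rw [pinv_mul_self hA, one_mulVec]
    _ = pinv A *ᵥ y := by rw [pinv, Matrix.mul_assoc, ← mulVec_mulVec, ← mulVec_mulVec, ← h,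
          mulVec_mulVec]

end Pinv

namespace IsNNLS

variable {r s : ℕ} {B : Matrix (Fin r) (Fin s) ℝ} {y : Fin r → ℝ} {v : Fin s → ℝ}

theorem transpose_mulVec_residual_eq_zero (hv : IsNNLS B y v) {k : Fin s} (hk : 0 < v k) :
    (Bᵀ *ᵥ (y - B *ᵥ v)) k = 0 := by
  set res := y - B *ᵥ v
  let f : ℝ → ℝ := fun ε => ∑ i, (res i - ε * B i k) ^ 2
  have hf : ∀ ε, f ε = ∑ i, (y i - (B *ᵥ (v + ε • Pi.single k 1)) i) ^ 2 := fun ε => by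
    simp only [f, res, mulVec_add, mulVec_smul, mulVec_single_one, Pi.add_apply, Pi.sub_apply,
      Pi.smul_apply, col_apply, smul_eq_mul, sub_sub]
  have hmin : IsLocalMin f 0 := by
    filter_upwards [Ioi_mem_nhds (neg_lt_zero.mpr hk)] with ε hε
    rw [hf, hf, zero_smul, add_zero]
    refine hv.2 _ fun j => ?_
    rcases eq_or_ne j k with rfl | hjk
    · have : -v j < ε := hε
      simp only [Pi.add_apply, Pi.smul_apply, Pi.single_eq_same, smul_eq_mul, mul_one]
      linarith
    · simpa [Pi.single_apply, hjk] using hv.1 j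
  have hderiv : HasDerivAt f (∑ i, -2 * (B i k * res i)) 0 :=
    (HasDerivAt.fun_sum fun i _ =>
      (((hasDerivAt_id' (0 : ℝ)).mul_const (B i k)).const_sub (res i)).fun_pow 2).congr_deriv
      (Finset.sum_congr rfl fun i _ => by
        simp only [Nat.cast_ofNat, zero_mul, sub_zero, Nat.add_one_sub_one, pow_one, one_mul,
          mul_neg, neg_mul, neg_inj]
        ring)
  have hcrit := hmin.hasDerivAt_eq_zero hderiv
  rw [← Finset.mul_sum, mul_eq_zero] at hcrit
  simpa [mulVec, dotProduct] using hcrit.resolve_left (by norm_num)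

theorem eq_extendRows_pinv_mulVec (hB : LinearIndependent ℝ B.col) (hv : IsNNLS B y v)
    {T : Finset (Fin s)} (hT : ∀ j, j ∈ T ↔ 0 < v j) :
    v = extendRows T (pinv (B.submatrix id Subtype.val)) *ᵥ y := by
  set BT := B.submatrix id (Subtype.val : T → Fin s)
  set vT : T → ℝ := fun j => v j
  have hv_off : ∀ j, j ∉ T → v j = 0 := fun j hj =>
    le_antisymm (not_lt.mp ((hT j).not.mp hj)) (hv.1 j)
  have hBv : B *ᵥ v = BT *ᵥ vT := by
    ext i
    rw [mulVec, dotProduct, ← Finset.sum_subset (Finset.subset_univ T)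
      (fun j _ hj => by rw [hv_off j hj, mul_zero]), ← Finset.sum_coe_sort]
    rfl
  have hBT : LinearIndependent ℝ BT.col := hB.comp _ Subtype.val_injective
  have hvT : vT = pinv BT *ᵥ y := by
    refine eq_pinv_mulVec_of_transpose_mulVec_sub_eq_zero hBT ?_
    ext k
    rw [← hBv]
    exact transpose_mulVec_residual_eq_zero hv ((hT k).mp k.2)
  ext j
  rw [extendRows_mulVec, ← hvT]
  split_ifs with hj
  · rfl
  · exact hv_off j hj

end IsNNLS

open Filter Topology

theorem hasFDerivWithinAt_nnls {r s : ℕ} {B : Matrix (Fin r) (Fin s) ℝ}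
    (hB : LinearIndependent ℝ B.col) {Q : (Fin r → ℝ) → Fin s → ℝ}
    (hQ : ∀ y, (∀ i, 0 ≤ y i) → IsNNLS B y (Q y)) {x : Fin r → ℝ} (hx : ∀ i, 0 ≤ x i)
    {T : Finset (Fin s)} (hT : ∀ᶠ y in 𝓝[{y | ∀ i, 0 ≤ y i}] x, ∀ j, j ∈ T ↔ 0 < Q y j) :
    HasFDerivWithinAt Q
      (mulVecLin (extendRows T (pinv (B.submatrix id Subtype.val)))).toContinuousLinearMap
      {y | ∀ i, 0 ≤ y i} x := by
  have hQ_lin : Q =ᶠ[𝓝[{y | ∀ i, 0 ≤ y i}] x]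
      (mulVecLin (extendRows T (pinv (B.submatrix id Subtype.val)))).toContinuousLinearMap := by
    filter_upwards [hT, self_mem_nhdsWithin] with y hyT hy
    exact (hQ y hy).eq_extendRows_pinv_mulVec hB hyT
  exact (ContinuousLinearMap.hasFDerivWithinAt _).congr_of_eventuallyEq hQ_lin
    (hQ_lin.eq_of_nhdsWithin hx)

section Iteration

variable {d : ℕ → ℕ} {QA : (ℓ : ℕ) → (Fin (d ℓ) → ℝ) → Fin (d (ℓ + 1)) → ℝ}

theorem iter_nonneg (hQA : ∀ ℓ y, (∀ i, 0 ≤ y i) → ∀ j, 0 ≤ QA ℓ y j) (ℓ t : ℕ)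
    {y : Fin (d (ℓ + 1)) → ℝ} (hy : ∀ i, 0 ≤ y i) : ∀ j, 0 ≤ iter QA ℓ t y j := by
  induction t with
  | zero => exact hy
  | succ t ih => exact hQA _ _ ih

theorem iter_apply_of_succ_eq {p : (ℓ : ℕ) → Fin (d ℓ) → ℝ} (hp : ∀ ℓ, p (ℓ + 1) = QA ℓ (p ℓ))
    (ℓ t : ℕ) : iter QA ℓ t (p (ℓ + 1)) = p (ℓ + t + 1) := by
  induction t with
  | zero => rfl
  | succ t ih => rw [iter, ih]; exact (hp _).symm

theorem hasFDerivWithinAt_iter (A : (ℓ : ℕ) → Matrix (Fin (d ℓ)) (Fin (d (ℓ + 1))) ℝ)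
    (Ts : (ℓ : ℕ) → Finset (Fin (d (ℓ + 1)))) {p : (ℓ : ℕ) → Fin (d ℓ) → ℝ}
    (hQA : ∀ ℓ y, (∀ i, 0 ≤ y i) → ∀ j, 0 ≤ QA ℓ y j) (hp : ∀ ℓ, p (ℓ + 1) = QA ℓ (p ℓ))
    (hderiv : ∀ ℓ, HasFDerivWithinAt (QA ℓ)
      (mulVecLin (extendRows (Ts ℓ) (pinv ((A ℓ).submatrix id Subtype.val)))).toContinuousLinearMap
      {y | ∀ i, 0 ≤ y i} (p ℓ)) (ℓ t : ℕ) :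
    HasFDerivWithinAt (iter QA ℓ (t + 1))
      (mulVecLin (extendRows (Ts (ℓ + t + 1)) (Phi A Ts ℓ t))).toContinuousLinearMap
      {y | ∀ i, 0 ≤ y i} (p (ℓ + 1)) := by
  induction t with
  | zero => exact hderiv (ℓ + 1)
  | succ t ih =>
    have hlast := (iter_apply_of_succ_eq hp ℓ (t + 1)).symm ▸ hderiv (ℓ + t + 2)
    have hcomp := hlast.comp (p (ℓ + 1)) ih fun y hy => iter_nonneg hQA ℓ (t + 1) hy
    rwa [← toContinuousLinearMap_mulVecLin_mul, extendRows_mul_extendRows] at hcomp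

end Iteration

theorem chained_support_jacobian_general (d : ℕ → ℕ)
    (A : (ℓ : ℕ) → Matrix (Fin (d ℓ)) (Fin (d (ℓ + 1))) ℝ)
    (hA0 : ∀ ℓ i j, 0 ≤ A ℓ i j) (hArank : ∀ ℓ, (A ℓ).rank = d (ℓ + 1))
    -- a universal NNLS solver
    (Q2 : (a b : ℕ) → (Fin a → Fin b → ℝ) → (Fin a → ℝ) → (Fin b → ℝ))
    (hQ2 : ∀ (a b : ℕ) (B : Fin a → Fin b → ℝ) (y : Fin a → ℝ),
      (∀ i j, 0 ≤ B i j) → (∀ i, 0 ≤ y i) → (Matrix.of B).rank = b →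
        IsNNLS (Matrix.of B) y (Q2 a b B y))
    (x : Fin (d 0) → ℝ) (hx0 : ∀ i, 0 ≤ x i)
    -- the layer vectors S^{(ℓ)} and the previous-layer inputs
    (Sv : (ℓ : ℕ) → Fin (d (ℓ + 1)) → ℝ)
    (prevS : (ℓ : ℕ) → Fin (d ℓ) → ℝ)
    (hprev0 : prevS 0 = x) (hprevS : ∀ ℓ, prevS (ℓ + 1) = Sv ℓ)
    (hSv : ∀ ℓ, Sv ℓ = Q2 (d ℓ) (d (ℓ + 1)) (fun i j => A ℓ i j) (prevS ℓ))
    -- each pair (A^{(ℓ)}, S^{(ℓ-1)}) lies in the locally-constant-support set U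
    (hU : ∀ ℓ, ∃ N : Set ((Fin (d ℓ) → Fin (d (ℓ + 1)) → ℝ) × (Fin (d ℓ) → ℝ)),
      IsOpen N ∧ ((fun i j => A ℓ i j), prevS ℓ) ∈ N ∧
        ∀ p ∈ N, (∀ i j, 0 ≤ p.1 i j) → (∀ i, 0 ≤ p.2 i) →
          (Matrix.of p.1).rank = d (ℓ + 1) →
            {j | 0 < Q2 (d ℓ) (d (ℓ + 1)) p.1 p.2 j} = {j | 0 < Sv ℓ j})
    -- the supports T^{(ℓ)}
    (Ts : (ℓ : ℕ) → Finset (Fin (d (ℓ + 1))))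
    (hTs : ∀ ℓ, Ts ℓ = Finset.univ.filter (fun j => 0 < Sv ℓ j))
    (ℓ₁ t : ℕ)
    (J : Matrix (Fin (d (ℓ₁ + t + 2))) (Fin (d (ℓ₁ + 1))) ℝ)
    (hJ : ∀ j i, J j i =
      if hj : j ∈ Ts (ℓ₁ + t + 1) then Phi A Ts ℓ₁ t ⟨j, hj⟩ i else 0) :
    HasFDerivWithinAt
      (fun y : Fin (d (ℓ₁ + 1)) → ℝ =>
        iter (fun ℓ => Q2 (d ℓ) (d (ℓ + 1)) (fun i j => A ℓ i j)) ℓ₁ (t + 1) y)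
      (Matrix.mulVecLin J).toContinuousLinearMap
      {y : Fin (d (ℓ₁ + 1)) → ℝ | ∀ j, 0 ≤ y j} (Sv ℓ₁) := by
  set QA : (ℓ : ℕ) → (Fin (d ℓ) → ℝ) → Fin (d (ℓ + 1)) → ℝ :=
    fun ℓ => Q2 (d ℓ) (d (ℓ + 1)) (fun i j => A ℓ i j)
  have hNNLS : ∀ ℓ y, (∀ i, 0 ≤ y i) → IsNNLS (A ℓ) y (QA ℓ y) :=
    fun ℓ y hy => hQ2 _ _ _ y (hA0 ℓ) hy (hArank ℓ)
  have hstep : ∀ ℓ, prevS (ℓ + 1) = QA ℓ (prevS ℓ) := fun ℓ => (hprevS ℓ).trans (hSv ℓ)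
  have hprev_nonneg : ∀ ℓ i, 0 ≤ prevS ℓ i := by
    intro ℓ
    induction ℓ with
    | zero => rwa [hprev0]
    | succ ℓ ih => rw [hstep]; exact (hNNLS ℓ _ ih).1
  have hlayer : ∀ ℓ, HasFDerivWithinAt (QA ℓ)
      (mulVecLin (extendRows (Ts ℓ) (pinv ((A ℓ).submatrix id Subtype.val)))).toContinuousLinearMap
      {y | ∀ i, 0 ≤ y i} (prevS ℓ) := by
    intro ℓ
    obtain ⟨N, hN_open, hN_mem, hN_supp⟩ := hU ℓ
    have hN : ∀ᶠ y in 𝓝 (prevS ℓ), ((fun i j => A ℓ i j), y) ∈ N :=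
      (hN_open.preimage (Continuous.prodMk_right _)).mem_nhds hN_mem
    refine hasFDerivWithinAt_nnls ((A ℓ).linearIndependent_col_of_rank_eq
      ((hArank ℓ).trans (Fintype.card_fin _).symm)) (hNNLS ℓ) (hprev_nonneg ℓ) ?_
    filter_upwards [nhdsWithin_le_nhds hN, self_mem_nhdsWithin] with y hyN hy j
    have hsupp := Set.ext_iff.mp (hN_supp _ hyN (hA0 ℓ) hy (hArank ℓ)) j
    simpa [hTs] using hsupp.symm
  obtain rfl : J = extendRows (Ts (ℓ₁ + t + 1)) (Phi A Ts ℓ₁ t) := by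
    ext j i
    exact hJ j i
  rw [← hprevS]
  exact hasFDerivWithinAt_iter A Ts (fun ℓ y hy => (hNNLS ℓ y hy).1) hstep hlayer ℓ₁ t

/-- chained support Jacobian: under locally-constant-support conditions at
every layer, the Jacobian of `S^{(ℓ₂)}_{:,m}` with respect to `S^{(ℓ₁)}_{:,m}`
(`ℓ₂ = ℓ₁ + t + 1`) has rows indexed by `T^{(ℓ₂)}` equal to `Φ` and zero rows
outside `T^{(ℓ₂)}`. -/
theorem chained_support_jacobian (d : ℕ → ℕ) (hd : ∀ ℓ, d (ℓ + 1) ≤ d ℓ)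
    (A : (ℓ : ℕ) → Matrix (Fin (d ℓ)) (Fin (d (ℓ + 1))) ℝ)
    (hA0 : ∀ ℓ i j, 0 ≤ A ℓ i j) (hArank : ∀ ℓ, (A ℓ).rank = d (ℓ + 1))
    -- a universal NNLS solver
    (Q2 : (a b : ℕ) → (Fin a → Fin b → ℝ) → (Fin a → ℝ) → (Fin b → ℝ))
    (hQ2 : ∀ (a b : ℕ) (B : Fin a → Fin b → ℝ) (y : Fin a → ℝ),
      (∀ i j, 0 ≤ B i j) → (∀ i, 0 ≤ y i) → (Matrix.of B).rank = b →
        IsNNLS (Matrix.of B) y (Q2 a b B y))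
    (x : Fin (d 0) → ℝ) (hx0 : ∀ i, 0 ≤ x i)
    -- the layer vectors S^{(ℓ)} and the previous-layer inputs
    (Sv : (ℓ : ℕ) → Fin (d (ℓ + 1)) → ℝ)
    (prevS : (ℓ : ℕ) → Fin (d ℓ) → ℝ)
    (hprev0 : prevS 0 = x) (hprevS : ∀ ℓ, prevS (ℓ + 1) = Sv ℓ)
    (hSv : ∀ ℓ, Sv ℓ = Q2 (d ℓ) (d (ℓ + 1)) (fun i j => A ℓ i j) (prevS ℓ))
    -- each pair (A^{(ℓ)}, S^{(ℓ-1)}) lies in the locally-constant-support set U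
    (hU : ∀ ℓ, ∃ N : Set ((Fin (d ℓ) → Fin (d (ℓ + 1)) → ℝ) × (Fin (d ℓ) → ℝ)),
      IsOpen N ∧ ((fun i j => A ℓ i j), prevS ℓ) ∈ N ∧
        ∀ p ∈ N, (∀ i j, 0 ≤ p.1 i j) → (∀ i, 0 ≤ p.2 i) →
          (Matrix.of p.1).rank = d (ℓ + 1) →
            {j | 0 < Q2 (d ℓ) (d (ℓ + 1)) p.1 p.2 j} = {j | 0 < Sv ℓ j})
    -- the supports T^{(ℓ)}
    (Ts : (ℓ : ℕ) → Finset (Fin (d (ℓ + 1))))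
    (hTs : ∀ ℓ, Ts ℓ = Finset.univ.filter (fun j => 0 < Sv ℓ j))
    (ℓ₁ t : ℕ)
    (J : Matrix (Fin (d (ℓ₁ + t + 2))) (Fin (d (ℓ₁ + 1))) ℝ)
    (hJ : ∀ j i, J j i =
      if hj : j ∈ Ts (ℓ₁ + t + 1) then Phi A Ts ℓ₁ t ⟨j, hj⟩ i else 0) :
    HasFDerivWithinAt
      (fun y : Fin (d (ℓ₁ + 1)) → ℝ =>
        iter (fun ℓ => Q2 (d ℓ) (d (ℓ + 1)) (fun i j => A ℓ i j)) ℓ₁ (t + 1) y)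
      (Matrix.mulVecLin J).toContinuousLinearMap
      {y : Fin (d (ℓ₁ + 1)) → ℝ | ∀ j, 0 ≤ y j} (Sv ℓ₁) :=
  chained_support_jacobian_general d A hA0 hArank Q2 hQ2 x hx0 Sv prevS hprev0 hprevS hSv hU Ts hTs
    ℓ₁ t J hJ
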